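/- arXiv:2406.13160 — 2 statements merged into one kernel-verified Lean document; each statement's English description precedes it below -/
import Mathlib

section
/- For any homogeneous u ∈ U_q^-(g) one has E_{i,m}(L_m(u)) = q_i^{−⟨h_i, wt(u)⟩ − 2} ζ_i L_m(e_i'(u)) and E*_{i,m}(L_m(u)) = q_i^{−⟨h_i, wt(u)⟩ − 2} ζ_i L_m(e_i^*(u)); in particular the operators E_{i,m} and E*_{i,m} preserve the subalgebra Â[m]. -/
/- Common setting: a symmetrizable generalized Cartan matrix, the field
`𝕂 = ℚ(q^{1/2})` (with `sqv = q^{1/2}` and `q = qh = sqv²`), quantum integers, the bosonic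
extension `hA A` presented by the `q`-Serre relations and the bosonic commutation
relations, its weight spaces and distinguished subalgebras, and the root-lattice
pairing. -/

set_option maxHeartbeats 1000000
set_option synthInstance.maxHeartbeats 400000

noncomputable section

structure GCM (I : Type) where
  c : I → I → ℤ
  d : I → ℤ
  d_pos : ∀ i, 0 < d i
  diag : ∀ i, c i i = 2
  offdiag : ∀ i j, i ≠ j → c i j ≤ 0
  dsymm : ∀ i j, d i * c i j = d j * c j i

abbrev 𝕂 : Type := RatFunc ℚ

/-- The square root `q^{1/2}` of `q`. -/
def sqv : 𝕂 := RatFunc.X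

/-- The indeterminate `q = (q^{1/2})²`. -/
def qh : 𝕂 := sqv ^ 2

def qNum (t : 𝕂) (n : ℕ) : 𝕂 := (t ^ n - t⁻¹ ^ n) / (t - t⁻¹)

def qFact (t : 𝕂) (n : ℕ) : 𝕂 := ∏ k ∈ Finset.range n, qNum t (k + 1)

def qBinom (t : 𝕂) (m k : ℕ) : 𝕂 := qFact t m / (qFact t k * qFact t (m - k))

variable {I : Type} [DecidableEq I]

/-- `q_i = q^{d_i}`. -/
def qd (A : GCM I) (i : I) : 𝕂 := qh ^ A.d i

/-- `ζ_i = 1 - q_i²`. -/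
def zi (A : GCM I) (i : I) : 𝕂 := 1 - qd A i ^ 2

/-- The `q`-Serre element `Σ_{k=0}^{b_{ij}} (-1)^k [b_{ij} choose k]_{q_i} a^k b a^{b_{ij}-k}`
for elements `a, b` of any `𝕂`-algebra, where `b_{ij} = 1 - c_{ij}`. -/
def serreIn {R : Type} [Ring R] [Algebra 𝕂 R] (A : GCM I) (i j : I) (a b : R) : R :=
  ∑ k ∈ Finset.range ((1 - A.c i j).toNat + 1),
    ((-1 : 𝕂) ^ k * qBinom (qd A i) ((1 - A.c i j).toNat) k) •
      (a ^ k * b * a ^ ((1 - A.c i j).toNat - k))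

/-- The defining relations of the bosonic extension: (a) for each `p`, the `q`-Serre
relations among the `f_{i,p}`; (b) for `m < p`,
`f_{i,m} f_{j,p} = q^{(-1)^{p-m+1}(α_i,α_j)} f_{j,p} f_{i,m} + δ_{(j,p),(i,m+1)}(1-q_i²)`. -/
inductive hARel (A : GCM I) : FreeAlgebra 𝕂 (I × ℤ) → FreeAlgebra 𝕂 (I × ℤ) → Prop
  | serre (i j : I) (p : ℤ) (h : i ≠ j) :
      hARel A (serreIn A i j (FreeAlgebra.ι 𝕂 (i, p)) (FreeAlgebra.ι 𝕂 (j, p))) 0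
  | comm (i j : I) (m p : ℤ) (h : m < p) :
      hARel A (FreeAlgebra.ι 𝕂 (i, m) * FreeAlgebra.ι 𝕂 (j, p))
        (qh ^ (((p - m + 1).negOnePow : ℤ) * (A.d i * A.c i j)) •
            (FreeAlgebra.ι 𝕂 (j, p) * FreeAlgebra.ι 𝕂 (i, m))
          + if j = i ∧ p = m + 1 then ((1 : 𝕂) - qd A i ^ 2) • 1 else 0)

/-- The bosonic extension `Â` associated with the generalized Cartan matrix. -/
abbrev hA (A : GCM I) : Type := RingQuot (hARel A)

/-- The generator `f_{i,p}` of the bosonic extension. -/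
def ff (A : GCM I) (i : I) (p : ℤ) : hA A :=
  RingQuot.mkAlgHom 𝕂 (hARel A) (FreeAlgebra.ι 𝕂 (i, p))

/-- The symmetric bilinear pairing on the root lattice, `(α_i, α_j) = d_i c_{ij}`. -/
def ip (A : GCM I) (β γ : I →₀ ℤ) : ℤ :=
  β.sum fun i a => γ.sum fun j b => a * b * (A.d i * A.c i j)

/-- `α_{i,m} = (-1)^m α_i` as an element of the root lattice. -/
def aim (i : I) (m : ℤ) : I →₀ ℤ := Finsupp.single i ((m.negOnePow : ℤ))

/-- The weight space of weight `β` of `Â`, where `wt (f_{i,p}) = (-1)^{p+1} α_i`. -/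
def hAwt (A : GCM I) (β : I →₀ ℤ) : Submodule 𝕂 (hA A) :=
  Submodule.span 𝕂 {x | ∃ l : List (I × ℤ),
    (l.map fun p => Finsupp.single p.1 (((p.2 + 1).negOnePow : ℤ))).sum = β ∧
    x = (l.map fun p => ff A p.1 p.2).prod}

/-- The subalgebra `Â[a,b]` generated by `{f_{i,k} | a ≤ k ≤ b}`. -/
def hAband (A : GCM I) (a b : ℤ) : Subalgebra 𝕂 (hA A) :=
  Algebra.adjoin 𝕂 {x | ∃ i k, a ≤ k ∧ k ≤ b ∧ x = ff A i k}

/-- The subalgebra `Â[m]`. -/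
def hAk (A : GCM I) (m : ℤ) : Subalgebra 𝕂 (hA A) := hAband A m m

/-- The subalgebra `Â_{≥ m}`. -/
def hAge (A : GCM I) (m : ℤ) : Subalgebra 𝕂 (hA A) :=
  Algebra.adjoin 𝕂 {x | ∃ i k, m ≤ k ∧ x = ff A i k}

/-- The subalgebra `Â_{≤ m}`. -/
def hAle (A : GCM I) (m : ℤ) : Subalgebra 𝕂 (hA A) :=
  Algebra.adjoin 𝕂 {x | ∃ i k, k ≤ m ∧ x = ff A i k}

/-- The subalgebra `Â_{> m}`. -/
def hAgt (A : GCM I) (m : ℤ) : Subalgebra 𝕂 (hA A) := hAge A (m + 1)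

/-- The subalgebra `Â_{< m}`. -/
def hAlt (A : GCM I) (m : ℤ) : Subalgebra 𝕂 (hA A) := hAle A (m - 1)

/-- The `q`-Serre relations for `U_q^-(g)` (with scalars extended to `ℚ(q^{1/2})`). -/
inductive URel (A : GCM I) : FreeAlgebra 𝕂 I → FreeAlgebra 𝕂 I → Prop
  | serre (i j : I) (h : i ≠ j) :
      URel A (serreIn A i j (FreeAlgebra.ι 𝕂 i) (FreeAlgebra.ι 𝕂 j)) 0

/-- `ℚ(q^{1/2}) ⊗_{ℚ(q)} U_q^-(g)`. -/
abbrev Uq (A : GCM I) : Type := RingQuot (URel A)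

/-- The generator `f_i` of `U_q^-(g)`. -/
def fg (A : GCM I) (i : I) : Uq A :=
  RingQuot.mkAlgHom 𝕂 (URel A) (FreeAlgebra.ι 𝕂 i)

/-- The weight space of weight `β` of `U_q^-(g)`, where `wt (f_i) = -α_i`. -/
def Uwt (A : GCM I) (β : I →₀ ℤ) : Submodule 𝕂 (Uq A) :=
  Submodule.span 𝕂 {x | ∃ l : List I,
    -((l.map fun i => Finsupp.single i (1 : ℤ)).sum) = β ∧ x = (l.map (fg A)).prod}

/-- `E_{i,m}(x) = [x, f_{i,m+1}]_q` for homogeneous `x` of weight `β`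
(note `wt (f_{i,m+1}) = α_{i,m}`). -/
def Ebr (A : GCM I) (i : I) (m : ℤ) (β : I →₀ ℤ) (x : hA A) : hA A :=
  x * ff A i (m + 1) - qh ^ (-(ip A β (aim i m))) • (ff A i (m + 1) * x)

/-- `E*_{i,m}(x) = [f_{i,m-1}, x]_q` for homogeneous `x` of weight `β`
(note `wt (f_{i,m-1}) = α_{i,m}`). -/
def Esbr (A : GCM I) (i : I) (m : ℤ) (β : I →₀ ℤ) (x : hA A) : hA A :=
  ff A i (m - 1) * x - qh ^ (-(ip A (aim i m) β)) • (x * ff A i (m - 1))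

/-- `⟨h_i, β⟩ = Σ_j c_{ij} β_j`. -/
def hp (A : GCM I) (i : I) (β : I →₀ ℤ) : ℤ := β.sum fun j b => A.c i j * b

/-
`E_{i,m}` and `E*_{i,m}` are twisted derivations of `Â`, e.g.
`[xy, f]_q = x [y, f]_q + q^{-(wt y, wt f)} [x, f]_q y`, and on generators of level `m` the
bosonic relation gives `[f_{j,m}, f_{i,m+1}]_q = [f_{i,m-1}, f_{j,m}]_q = δ_{ij} ζ_i`. Hence, on
`L_m` of a monomial, both sides of each identity obey the recursion defining `e_i'`
(resp. `e_i^*`). For the second part, the root-lattice grading of `Â`, realized as the algebra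
map `Â → Â[I →₀ ℤ]` placing `f_{i,p}` in degree `wt f_{i,p}`, shows that a homogeneous element
of `Â[m]` of weight `β` is `L_m` of an element of `U_q^-(g)` of weight `(-1)^m β`, so the
identities map it into `L_m(U_q^-(g)) ⊆ Â[m]`.
-/

lemma qh_ne_zero : (qh : 𝕂) ≠ 0 := pow_ne_zero _ RatFunc.X_ne_zero

section RootLattice

variable {ι : Type} (A : GCM ι)

lemma ip_add_left (β β' γ : ι →₀ ℤ) : ip A (β + β') γ = ip A β γ + ip A β' γ := by
  unfold ip
  rw [Finsupp.sum_add_index' (fun _ => by simp) fun _ _ _ => by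
    rw [← Finsupp.sum_add]; exact Finsupp.sum_congr fun _ _ => by ring]

lemma ip_smul_left (c : ℤ) (β γ : ι →₀ ℤ) : ip A (c • β) γ = c * ip A β γ := by
  unfold ip
  rw [Finsupp.sum_smul_index' (fun _ => by simp), Finsupp.mul_sum]
  refine Finsupp.sum_congr fun _ _ => ?_
  rw [Finsupp.mul_sum]
  exact Finsupp.sum_congr fun _ _ => by rw [smul_eq_mul]; ring

lemma ip_symm (β γ : ι →₀ ℤ) : ip A β γ = ip A γ β := by
  unfold ip
  rw [Finsupp.sum_comm]
  exact Finsupp.sum_congr fun j _ => Finsupp.sum_congr fun i _ => by rw [A.dsymm]; ring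

lemma ip_add_right (β γ γ' : ι →₀ ℤ) : ip A β (γ + γ') = ip A β γ + ip A β γ' := by
  rw [ip_symm, ip_add_left, ip_symm A γ, ip_symm A γ']

lemma ip_single_right (β : ι →₀ ℤ) (i : ι) (b : ℤ) :
    ip A β (Finsupp.single i b) = b * (A.d i * hp A i β) := by
  unfold ip hp
  rw [Finsupp.mul_sum, Finsupp.mul_sum]
  exact Finsupp.sum_congr fun j _ => by
    rw [Finsupp.sum_single_index (by ring), A.dsymm j i]; ring

lemma hp_add (i : ι) (β β' : ι →₀ ℤ) : hp A i (β + β') = hp A i β + hp A i β' :=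
  Finsupp.sum_add_index' (fun _ => by ring) fun _ _ _ => by ring

lemma hp_neg (i : ι) (β : ι →₀ ℤ) : hp A i (-β) = -hp A i β := by
  have h := hp_add A i β (-β)
  rw [add_neg_cancel, show hp A i 0 = 0 from Finsupp.sum_zero_index] at h
  linarith

lemma hp_single (i j : ι) (b : ℤ) : hp A i (Finsupp.single j b) = A.c i j * b :=
  Finsupp.sum_single_index (by ring)

lemma negOnePow_smul_negOnePow_smul (m : ℤ) (β : ι →₀ ℤ) :
    (m.negOnePow : ℤ) • (m.negOnePow : ℤ) • β = β := by
  rw [smul_smul, ← Units.val_mul, Int.units_mul_self, Units.val_one, one_smul]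

lemma ip_negOnePow_smul_aim (i : ι) (m : ℤ) (β : ι →₀ ℤ) :
    ip A ((m.negOnePow : ℤ) • β) (aim i m) = A.d i * hp A i β := by
  rw [aim, ip_smul_left, ip_single_right, ← mul_assoc, ← Units.val_mul, Int.units_mul_self,
    Units.val_one, one_mul]

lemma ip_aim_negOnePow_smul (i : ι) (m : ℤ) (β : ι →₀ ℤ) :
    ip A (aim i m) ((m.negOnePow : ℤ) • β) = A.d i * hp A i β := by
  rw [ip_symm, ip_negOnePow_smul_aim]

end RootLattice

section TwistedDerivations

variable (A : GCM I)

lemma ff_mul_ff_of_lt (i j : I) {m p : ℤ} (h : m < p) :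
    ff A i m * ff A j p =
      qh ^ (((p - m + 1).negOnePow : ℤ) * (A.d i * A.c i j)) • (ff A j p * ff A i m)
        + if j = i ∧ p = m + 1 then ((1 : 𝕂) - qd A i ^ 2) • (1 : hA A) else 0 := by
  have h := RingQuot.mkAlgHom_rel 𝕂 (hARel.comm (A := A) i j m p h)
  simp only [map_mul, map_add, map_smul, apply_ite (RingQuot.mkAlgHom 𝕂 (hARel A)), map_one,
    map_zero] at h
  exact h

lemma Ebr_mul (i : I) (m : ℤ) (β γ : I →₀ ℤ) (x y : hA A) :
    Ebr A i m (β + γ) (x * y) =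
      x * Ebr A i m γ y + qh ^ (-ip A γ (aim i m)) • (Ebr A i m β x * y) := by
  simp only [Ebr, ip_add_left, neg_add, zpow_add₀ qh_ne_zero, mul_sub, sub_mul, mul_smul_comm,
    smul_mul_assoc, smul_sub, smul_smul, mul_assoc]
  rw [mul_comm (qh ^ (-ip A β (aim i m)))]
  abel

lemma Esbr_mul (i : I) (m : ℤ) (β γ : I →₀ ℤ) (x y : hA A) :
    Esbr A i m (β + γ) (x * y) =
      Esbr A i m β x * y + qh ^ (-ip A (aim i m) β) • (x * Esbr A i m γ y) := by
  simp only [Esbr, ip_add_right, neg_add, zpow_add₀ qh_ne_zero, mul_sub, sub_mul, mul_smul_comm,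
    smul_mul_assoc, smul_sub, smul_smul, mul_assoc]
  abel

lemma Ebr_ff (i j : I) (m : ℤ) :
    Ebr A i m ((m.negOnePow : ℤ) • -Finsupp.single j 1) (ff A j m) =
      if i = j then zi A i • 1 else 0 := by
  have h2 : (m + 1 - m + 1).negOnePow = 1 := by
    rw [show m + 1 - m + 1 = 2 by ring]; rfl
  rw [Ebr, ff_mul_ff_of_lt A j i (lt_add_one m), h2, ip_negOnePow_smul_aim, hp_neg, hp_single,
    A.dsymm j i, Units.val_one, one_mul, mul_neg, mul_one, neg_neg, add_sub_cancel_left]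
  by_cases hij : i = j
  · subst hij; simp [zi]
  · simp [hij]

lemma Esbr_ff (i j : I) (m : ℤ) :
    Esbr A i m ((m.negOnePow : ℤ) • -Finsupp.single j 1) (ff A j m) =
      if i = j then zi A i • 1 else 0 := by
  have h2 : (m - (m - 1) + 1).negOnePow = 1 := by
    rw [show m - (m - 1) + 1 = 2 by ring]; rfl
  rw [Esbr, ff_mul_ff_of_lt A i j (sub_one_lt m), h2, ip_aim_negOnePow_smul, hp_neg, hp_single,
    Units.val_one, one_mul, mul_neg, mul_one, neg_neg, add_sub_cancel_left]
  by_cases hij : i = j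
  · subst hij; simp [zi]
  · simp [hij, Ne.symm hij]

end TwistedDerivations

section LevelEmbedding

variable (A : GCM I) {m : ℤ} {Lm : Uq A →ₐ[𝕂] hA A}

lemma Ebr_Lm_listProd {e' : I → Module.End 𝕂 (Uq A)} (he'one : ∀ i, e' i 1 = 0)
    (he'f : ∀ i j u, e' i (fg A j * u) =
      (if i = j then u else 0) + qh ^ (-(A.d i * A.c i j)) • (fg A j * e' i u))
    (hLm : ∀ i, Lm (fg A i) = ff A i m) (i : I) (l : List I) :
    Ebr A i m ((m.negOnePow : ℤ) • -(l.map fun j => Finsupp.single j (1 : ℤ)).sum)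
        (Lm (l.map (fg A)).prod) =
      (qh ^ (A.d i * (-hp A i (-(l.map fun j => Finsupp.single j (1 : ℤ)).sum) - 2)) *
        zi A i) • Lm (e' i (l.map (fg A)).prod) := by
  induction l with
  | nil => simp [Ebr, ip, he'one]
  | cons j l ih =>
    set w := -(l.map fun j => Finsupp.single j (1 : ℤ)).sum
    have hw : -((j :: l).map fun j => Finsupp.single j (1 : ℤ)).sum = -Finsupp.single j 1 + w := by
      rw [List.map_cons, List.sum_cons, neg_add]
    have hc : qh ^ (A.d i * (-hp A i (-Finsupp.single j 1 + w) - 2)) * zi A i *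
        qh ^ (-(A.d i * A.c i j)) = qh ^ (A.d i * (-hp A i w - 2)) * zi A i := by
      rw [mul_right_comm, ← zpow_add₀ qh_ne_zero]
      simp only [hp_add, hp_neg, hp_single]; ring_nf
    rw [hw, smul_add, List.map_cons, List.prod_cons, map_mul, hLm, Ebr_mul, ih, Ebr_ff, he'f,
      map_add, map_smul, map_mul, hLm, smul_add, smul_smul, hc, mul_smul_comm,
      ip_negOnePow_smul_aim]
    by_cases hij : i = j
    · subst hij
      have hs : qh ^ (-(A.d i * hp A i w)) * zi A i =
          qh ^ (A.d i * (-hp A i (-Finsupp.single i 1 + w) - 2)) * zi A i := by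
        simp only [hp_add, hp_neg, hp_single, A.diag]; ring_nf
      rw [if_pos rfl, if_pos rfl, smul_mul_assoc, one_mul, smul_smul, hs, add_comm]
    · simp [hij]

lemma Esbr_Lm_listProd {es : I → Module.End 𝕂 (Uq A)} (hesone : ∀ i, es i 1 = 0)
    (hesf : ∀ i j u, es i (u * fg A j) =
      (if i = j then u else 0) + qh ^ (-(A.d i * A.c i j)) • (es i u * fg A j))
    (hLm : ∀ i, Lm (fg A i) = ff A i m) (i : I) (l : List I) :
    Esbr A i m ((m.negOnePow : ℤ) • -(l.map fun j => Finsupp.single j (1 : ℤ)).sum)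
        (Lm (l.map (fg A)).prod) =
      (qh ^ (A.d i * (-hp A i (-(l.map fun j => Finsupp.single j (1 : ℤ)).sum) - 2)) *
        zi A i) • Lm (es i (l.map (fg A)).prod) := by
  induction l using List.reverseRecOn with
  | nil => simp [Esbr, ip, hesone]
  | append_singleton l j ih =>
    set w := -(l.map fun j => Finsupp.single j (1 : ℤ)).sum
    have hw : -((l ++ [j]).map fun j => Finsupp.single j (1 : ℤ)).sum =
        w + -Finsupp.single j 1 := by
      rw [List.map_append, List.sum_append, neg_add, List.map_singleton, List.sum_singleton]
    have hc : qh ^ (A.d i * (-hp A i (w + -Finsupp.single j 1) - 2)) * zi A i *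
        qh ^ (-(A.d i * A.c i j)) = qh ^ (A.d i * (-hp A i w - 2)) * zi A i := by
      rw [mul_right_comm, ← zpow_add₀ qh_ne_zero]
      simp only [hp_add, hp_neg, hp_single]; ring_nf
    rw [hw, smul_add, List.map_append, List.prod_append, List.map_singleton, List.prod_singleton,
      map_mul, hLm, Esbr_mul, ih, Esbr_ff, hesf, map_add, map_smul, map_mul, hLm, smul_add,
      smul_smul, hc, smul_mul_assoc, ip_aim_negOnePow_smul]
    by_cases hij : i = j
    · subst hij
      have hs : qh ^ (-(A.d i * hp A i w)) * zi A i =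
          qh ^ (A.d i * (-hp A i (w + -Finsupp.single i 1) - 2)) * zi A i := by
        simp only [hp_add, hp_neg, hp_single, A.diag]; ring_nf
      rw [if_pos rfl, if_pos rfl, mul_smul_comm, mul_one, smul_smul, hs, add_comm]
    · simp [hij]

lemma Ebr_Lm_of_mem_Uwt {e' : I → Module.End 𝕂 (Uq A)} (he'one : ∀ i, e' i 1 = 0)
    (he'f : ∀ i j u, e' i (fg A j * u) =
      (if i = j then u else 0) + qh ^ (-(A.d i * A.c i j)) • (fg A j * e' i u))
    (hLm : ∀ i, Lm (fg A i) = ff A i m) (i : I) {β : I →₀ ℤ} {u : Uq A} (hu : u ∈ Uwt A β) :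
    Ebr A i m ((m.negOnePow : ℤ) • β) (Lm u) =
      (qh ^ (A.d i * (-hp A i β - 2)) * zi A i) • Lm (e' i u) := by
  let F : Uq A →ₗ[𝕂] hA A := (LinearMap.mulRight 𝕂 (ff A i (m + 1)) -
    qh ^ (-ip A ((m.negOnePow : ℤ) • β) (aim i m)) • LinearMap.mulLeft 𝕂 (ff A i (m + 1))) ∘ₗ
      Lm.toLinearMap
  let G : Uq A →ₗ[𝕂] hA A := (qh ^ (A.d i * (-hp A i β - 2)) * zi A i) •
    (Lm.toLinearMap ∘ₗ e' i)
  suffices Uwt A β ≤ LinearMap.eqLocus F G from this hu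
  refine Submodule.span_le.mpr ?_
  rintro _ ⟨l, rfl, rfl⟩
  exact Ebr_Lm_listProd A he'one he'f hLm i l

lemma Esbr_Lm_of_mem_Uwt {es : I → Module.End 𝕂 (Uq A)} (hesone : ∀ i, es i 1 = 0)
    (hesf : ∀ i j u, es i (u * fg A j) =
      (if i = j then u else 0) + qh ^ (-(A.d i * A.c i j)) • (es i u * fg A j))
    (hLm : ∀ i, Lm (fg A i) = ff A i m) (i : I) {β : I →₀ ℤ} {u : Uq A} (hu : u ∈ Uwt A β) :
    Esbr A i m ((m.negOnePow : ℤ) • β) (Lm u) =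
      (qh ^ (A.d i * (-hp A i β - 2)) * zi A i) • Lm (es i u) := by
  let F : Uq A →ₗ[𝕂] hA A := (LinearMap.mulLeft 𝕂 (ff A i (m - 1)) -
    qh ^ (-ip A (aim i m) ((m.negOnePow : ℤ) • β)) • LinearMap.mulRight 𝕂 (ff A i (m - 1))) ∘ₗ
      Lm.toLinearMap
  let G : Uq A →ₗ[𝕂] hA A := (qh ^ (A.d i * (-hp A i β - 2)) * zi A i) •
    (Lm.toLinearMap ∘ₗ es i)
  suffices Uwt A β ≤ LinearMap.eqLocus F G from this hu
  refine Submodule.span_le.mpr ?_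
  rintro _ ⟨l, rfl, rfl⟩
  exact Esbr_Lm_listProd A hesone hesf hLm i l

end LevelEmbedding

section Grading

lemma map_serreIn {ι R S : Type} [Ring R] [Ring S] [Algebra 𝕂 R] [Algebra 𝕂 S]
    (φ : R →ₐ[𝕂] S) (A : GCM ι) (i j : ι) (a b : R) :
    φ (serreIn A i j a b) = serreIn A i j (φ a) (φ b) := by
  simp only [serreIn, map_sum, map_smul, map_mul, map_pow]

lemma serreIn_single {ι R G : Type} [Ring R] [Algebra 𝕂 R] [AddCommMonoid G] (A : GCM ι)
    (i j : ι) (a b : G) (x y : R) :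
    serreIn A i j (AddMonoidAlgebra.single a x) (AddMonoidAlgebra.single b y) =
      AddMonoidAlgebra.single ((1 - A.c i j).toNat • a + b) (serreIn A i j x y) := by
  simp only [serreIn, ← AddMonoidAlgebra.singleAddHom_apply, map_sum]
  refine Finset.sum_congr rfl fun k hk => ?_
  have hk : k ≤ (1 - A.c i j).toNat := Nat.lt_succ_iff.mp (Finset.mem_range.mp hk)
  rw [AddMonoidAlgebra.singleAddHom_apply, AddMonoidAlgebra.singleAddHom_apply,
    AddMonoidAlgebra.single_pow, AddMonoidAlgebra.single_pow, AddMonoidAlgebra.single_mul_single,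
    AddMonoidAlgebra.single_mul_single, AddMonoidAlgebra.smul_single]
  congr 1
  rw [add_right_comm, ← add_smul, Nat.add_sub_cancel' hk]

def genWt {ι : Type} (i : ι) (p : ℤ) : ι →₀ ℤ := Finsupp.single i ((p + 1).negOnePow : ℤ)

lemma genWt_add_genWt_succ {ι : Type} (i : ι) (p : ℤ) : genWt i p + genWt i (p + 1) = 0 := by
  rw [genWt, genWt, ← Finsupp.single_add, Int.negOnePow_succ (p + 1), Units.val_neg,
    add_neg_cancel, Finsupp.single_zero]

lemma negOnePow_smul_genWt {ι : Type} (j : ι) (m : ℤ) :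
    (m.negOnePow : ℤ) • genWt j m = -Finsupp.single j 1 := by
  rw [genWt, Finsupp.smul_single, Int.negOnePow_succ, Units.val_neg, smul_eq_mul, mul_neg,
    ← Units.val_mul, Int.units_mul_self, Units.val_one, Finsupp.single_neg]

variable (A : GCM I)

def gradeFree : FreeAlgebra 𝕂 (I × ℤ) →ₐ[𝕂] AddMonoidAlgebra (hA A) (I →₀ ℤ) :=
  FreeAlgebra.lift 𝕂 fun p => AddMonoidAlgebra.single (genWt p.1 p.2) (ff A p.1 p.2)

lemma gradeFree_ι (p : I × ℤ) :
    gradeFree A (FreeAlgebra.ι 𝕂 p) = AddMonoidAlgebra.single (genWt p.1 p.2) (ff A p.1 p.2) :=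
  FreeAlgebra.lift_ι_apply _ _

lemma serreIn_ff (i j : I) (p : ℤ) (hij : i ≠ j) : serreIn A i j (ff A i p) (ff A j p) = 0 := by
  have h := RingQuot.mkAlgHom_rel 𝕂 (hARel.serre (A := A) i j p hij)
  rwa [map_serreIn, map_zero] at h

lemma gradeFree_eq_of_hARel {x y : FreeAlgebra 𝕂 (I × ℤ)} (h : hARel A x y) :
    gradeFree A x = gradeFree A y := by
  induction h with
  | serre i j p hij =>
    have h := serreIn_single A i j (genWt i p) (genWt j p) (ff A i p) (ff A j p)
    rw [serreIn_ff A i j p hij, AddMonoidAlgebra.single_zero] at h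
    simpa only [serreIn, map_sum, map_smul, map_mul, map_pow, map_zero, gradeFree_ι] using h
  | comm i j m p hmp =>
    rw [map_mul, map_add, map_smul, map_mul, apply_ite (gradeFree A), map_smul, map_one, map_zero]
    simp only [gradeFree_ι, AddMonoidAlgebra.single_mul_single]
    rw [ff_mul_ff_of_lt A i j hmp, AddMonoidAlgebra.single_add, AddMonoidAlgebra.smul_single,
      add_comm (genWt i m)]
    congr 1
    split_ifs with hc
    · obtain ⟨rfl, rfl⟩ := hc
      rw [add_comm, genWt_add_genWt_succ, AddMonoidAlgebra.one_def, AddMonoidAlgebra.smul_single]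
    · exact AddMonoidAlgebra.single_zero _

/-- The coefficient of `gradeHom A x` in degree `β` is the weight-`β` component of `x`. -/
def gradeHom : hA A →ₐ[𝕂] AddMonoidAlgebra (hA A) (I →₀ ℤ) :=
  RingQuot.liftAlgHom 𝕂 ⟨gradeFree A, fun _ _ => gradeFree_eq_of_hARel A⟩

lemma gradeHom_ff (i : I) (p : ℤ) :
    gradeHom A (ff A i p) = AddMonoidAlgebra.single (genWt i p) (ff A i p) := by
  rw [gradeHom, ff, RingQuot.liftAlgHom_mkAlgHom_apply, gradeFree_ι]
  rfl

lemma gradeHom_of_mem_hAwt {β : I →₀ ℤ} {x : hA A} (hx : x ∈ hAwt A β) :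
    gradeHom A x = AddMonoidAlgebra.single β x := by
  induction hx using Submodule.span_induction with
  | mem x hx =>
    obtain ⟨l, rfl, rfl⟩ := hx
    induction l with
    | nil => simp [AddMonoidAlgebra.one_def]
    | cons p l ih =>
      simp only [List.map_cons, List.prod_cons, List.sum_cons, map_mul, ih, gradeHom_ff,
        AddMonoidAlgebra.single_mul_single, genWt]
  | zero => rw [map_zero, AddMonoidAlgebra.single_zero]
  | add x y _ _ hx hy => rw [map_add, hx, hy, AddMonoidAlgebra.single_add]
  | smul c x _ hx => rw [map_smul, hx, AddMonoidAlgebra.smul_single]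

end Grading

section WeightSpaces

variable {ι : Type} (A : GCM ι)

lemma Uwt_mul_le (β γ : ι →₀ ℤ) : Uwt A β * Uwt A γ ≤ Uwt A (β + γ) := by
  rw [Uwt, Uwt, Submodule.span_mul_span]
  refine Submodule.span_le.mpr ?_
  rintro _ ⟨_, ⟨l, rfl, rfl⟩, _, ⟨l', rfl, rfl⟩, rfl⟩
  exact Submodule.subset_span ⟨l ++ l', by simp [add_comm], by simp⟩

lemma algebraMap_mem_Uwt_zero (r : 𝕂) : algebraMap 𝕂 (Uq A) r ∈ Uwt A 0 := by
  rw [Algebra.algebraMap_eq_smul_one]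
  exact Submodule.smul_mem _ r (Submodule.subset_span ⟨[], by simp, by simp⟩)

lemma fg_mem_Uwt (j : ι) : fg A j ∈ Uwt A (-Finsupp.single j 1) :=
  Submodule.subset_span ⟨[j], by simp, by simp⟩

end WeightSpaces

section HomogeneousLevel

variable (A : GCM I) {m : ℤ} {Lm : Uq A →ₐ[𝕂] hA A}

lemma mul_mem_map_Uwt {β γ : I →₀ ℤ} {x y : hA A} (hx : x ∈ (Uwt A β).map Lm.toLinearMap)
    (hy : y ∈ (Uwt A γ).map Lm.toLinearMap) : x * y ∈ (Uwt A (β + γ)).map Lm.toLinearMap := by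
  obtain ⟨u, hu, rfl⟩ := hx
  obtain ⟨v, hv, rfl⟩ := hy
  exact ⟨u * v, Uwt_mul_le A β γ (Submodule.mul_mem_mul hu hv), map_mul Lm u v⟩

lemma Lm_mem_hAk (hLm : ∀ i, Lm (fg A i) = ff A i m) (u : Uq A) : Lm u ∈ hAk A m := by
  obtain ⟨w, rfl⟩ := RingQuot.mkAlgHom_surjective 𝕂 (URel A) u
  induction w using FreeAlgebra.induction with
  | grade0 r => rw [AlgHom.commutes, AlgHom.commutes]; exact Subalgebra.algebraMap_mem _ r
  | grade1 j =>
    rw [← fg, hLm j]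
    exact Algebra.subset_adjoin ⟨j, m, le_rfl, le_rfl, rfl⟩
  | mul a b ha hb => rw [map_mul, map_mul]; exact mul_mem ha hb
  | add a b ha hb => rw [map_add, map_add]; exact add_mem ha hb

lemma coeff_gradeHom_mem_map_Uwt (hLm : ∀ i, Lm (fg A i) = ff A i m) {x : hA A}
    (hx : x ∈ hAk A m) (β : I →₀ ℤ) :
    (gradeHom A x).coeff β ∈ (Uwt A ((m.negOnePow : ℤ) • β)).map Lm.toLinearMap := by
  induction hx using Algebra.adjoin_induction generalizing β with
  | mem x hx =>
    obtain ⟨j, k, hmk, hkm, rfl⟩ := hx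
    obtain rfl : k = m := le_antisymm hkm hmk
    rw [gradeHom_ff, AddMonoidAlgebra.coeff_single, Finsupp.single_apply]
    split_ifs with hβ
    · subst hβ
      rw [negOnePow_smul_genWt]
      exact ⟨fg A j, fg_mem_Uwt A j, hLm j⟩
    · exact zero_mem _
  | algebraMap r =>
    rw [AlgHom.commutes, AddMonoidAlgebra.coe_algebraMap, Function.comp_apply,
      AddMonoidAlgebra.coeff_single, Finsupp.single_apply]
    split_ifs with hβ
    · subst hβ
      rw [smul_zero]
      exact ⟨algebraMap 𝕂 (Uq A) r, algebraMap_mem_Uwt_zero A r, AlgHom.commutes Lm r⟩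
    · exact zero_mem _
  | add x y _ _ hx hy =>
    rw [map_add, AddMonoidAlgebra.coeff_add, Finsupp.add_apply]
    exact add_mem (hx β) (hy β)
  | mul x y _ _ hx hy =>
    rw [map_mul, AddMonoidAlgebra.coeff_mul]
    refine Submodule.finsuppSum_mem _ _ _ _ fun γ _ => Submodule.finsuppSum_mem _ _ _ _ fun δ _ => ?_
    split_ifs with hγδ
    · subst hγδ
      rw [smul_add]
      exact mul_mem_map_Uwt A (hx γ) (hy δ)
    · exact zero_mem _

lemma mem_map_Uwt_of_mem_hAk (hLm : ∀ i, Lm (fg A i) = ff A i m) {β : I →₀ ℤ} {x : hA A}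
    (hxm : x ∈ hAk A m) (hxβ : x ∈ hAwt A β) :
    x ∈ (Uwt A ((m.negOnePow : ℤ) • β)).map Lm.toLinearMap := by
  simpa [gradeHom_of_mem_hAwt A hxβ] using coeff_gradeHom_mem_map_Uwt A hLm hxm β

end HomogeneousLevel

/-- for homogeneous `u ∈ U_q^-(g)` of weight `β`,
`E_{i,m}(L_m(u)) = q_i^{-⟨h_i, wt u⟩ - 2} ζ_i L_m(e_i'(u))` and
`E*_{i,m}(L_m(u)) = q_i^{-⟨h_i, wt u⟩ - 2} ζ_i L_m(e_i^*(u))`;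
in particular `E_{i,m}` and `E*_{i,m}` preserve `Â[m]`.
Here `L_m` is the algebra isomorphism `U → Â[m]` with `L_m(f_i) = f_{i,m}` (so `L_m(u)`
has `Â`-weight `(-1)^m β`), and `e_i'`, `e_i^*` are characterized as in the context. -/
theorem statement11 (A : GCM I)
    (e' es : I → Module.End 𝕂 (Uq A))
    (he'one : ∀ i, e' i 1 = 0)
    (he'f : ∀ i j u, e' i (fg A j * u) =
      (if i = j then u else 0) + qh ^ (-(A.d i * A.c i j)) • (fg A j * e' i u))
    (hesone : ∀ i, es i 1 = 0)
    (hesf : ∀ i j u, es i (u * fg A j) =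
      (if i = j then u else 0) + qh ^ (-(A.d i * A.c i j)) • (es i u * fg A j))
    (m : ℤ) (Lm : Uq A →ₐ[𝕂] hA A) (hLm : ∀ i, Lm (fg A i) = ff A i m) :
    (∀ (i : I) (β : I →₀ ℤ) (u : Uq A), u ∈ Uwt A β →
      Ebr A i m ((m.negOnePow : ℤ) • β) (Lm u) =
        (qh ^ (A.d i * (-(hp A i β) - 2)) * zi A i) • Lm (e' i u) ∧
      Esbr A i m ((m.negOnePow : ℤ) • β) (Lm u) =
        (qh ^ (A.d i * (-(hp A i β) - 2)) * zi A i) • Lm (es i u)) ∧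
    (∀ (i : I) (β : I →₀ ℤ) (x : hA A), x ∈ hAk A m → x ∈ hAwt A β →
      Ebr A i m β x ∈ hAk A m ∧ Esbr A i m β x ∈ hAk A m) := by
  refine ⟨fun i β u hu => ⟨Ebr_Lm_of_mem_Uwt A he'one he'f hLm i hu,
    Esbr_Lm_of_mem_Uwt A hesone hesf hLm i hu⟩, fun i β x hxm hxβ => ?_⟩
  obtain ⟨u, hu, rfl⟩ := mem_map_Uwt_of_mem_hAk A hLm hxm hxβ
  rw [AlgHom.toLinearMap_apply, ← negOnePow_smul_negOnePow_smul m β, Ebr_Lm_of_mem_Uwt A he'one he'f hLm i hu,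
    Esbr_Lm_of_mem_Uwt A hesone hesf hLm i hu]
  exact ⟨Subalgebra.smul_mem _ (Lm_mem_hAk A hLm _) _, Subalgebra.smul_mem _ (Lm_mem_hAk A hLm _) _⟩
end
end

section
/- Let m ∈ Z. For any homogeneous x, z ∈ Â_{≥m} and homogeneous y, w ∈ Â_{<m}, one has ⟨⟨xy, zw⟩⟩ = q^{(wt y, wt z)} ⟨⟨x,z⟩⟩ · ⟨⟨y,w⟩⟩. In particular ⟨⟨xy, w⟩⟩ = 0 when wt(x) ≠ 0. Moreover M(xy) = M(x)M(y) for any x ∈ Â_{≥m} and y ∈ Â_{≤m}. -/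
/- Common setting: a symmetrizable generalized Cartan matrix, the field
`𝕂 = ℚ(q^{1/2})` (with `sqv = q^{1/2}` and `q = qh = sqv²`), quantum integers, the bosonic
extension `hA A` presented by the `q`-Serre relations and the bosonic commutation
relations, its weight spaces and distinguished subalgebras, and the root-lattice
pairing. -/

set_option maxHeartbeats 1000000
set_option synthInstance.maxHeartbeats 400000

noncomputable section

variable {I : Type} [DecidableEq I]

/-! Using the commutation relations, every monomial in the generators is a combination of
normal-ordered monomials (levels non-increasing from left to right) made of a sub-multiset of
its letters and of the same weight. In a normal-ordered monomial with all letters at levels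
`≥ m`, the letters of level `m` form a block at the right end, of nonzero weight unless empty,
and the hypothesis on `M` kills such a block placed between higher and lower letters. This gives
`M = 0` on nonzero weights, and `M(xy) = M(x) M(y)` for `x ∈ Â_{≥m}`, `y ∈ Â_{≤m}` by induction
upwards in `m`. For the pairing, `𝒟̄` raises levels by one, so `y ∈ Â_{<m}` and `𝒟̄ z ∈ Â_{>m}`
are two levels apart and `q`-commute with exponent `(wt y, wt z)`; moving `y` past `𝒟̄ z` and
factoring `M` gives the formula. -/

theorem Submodule.mul_mem_of_mem_span {K R : Type*} [CommSemiring K] [Semiring R] [Algebra K R]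
    {s : Set R} {p : Submodule K R} (a : R) {x : R} (hx : x ∈ Submodule.span K s)
    (h : ∀ y ∈ s, a * y ∈ p) : a * x ∈ p :=
  (Submodule.map_span_le (LinearMap.mulLeft K a) s p).2 h (Submodule.mem_map_of_mem hx)

theorem LinearMap.eqOn_span₂ {R E F G : Type*} [CommSemiring R] [AddCommMonoid E]
    [Module R E] [AddCommMonoid F] [Module R F] [AddCommMonoid G] [Module R G]
    {B B' : E →ₗ[R] F →ₗ[R] G} {s : Set E} {t : Set F} (h : ∀ x ∈ s, ∀ y ∈ t, B x y = B' x y)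
    {x : E} {y : F} (hx : x ∈ Submodule.span R s) (hy : y ∈ Submodule.span R t) :
    B x y = B' x y :=
  LinearMap.eqOn_span' (f := B.flip y) (g := B'.flip y)
    (fun x' hx' => LinearMap.eqOn_span' (h x' hx') hy) hx

theorem LinearMap.map_mul_eq_mul_of_mem_span {K R : Type*} [CommSemiring K] [Semiring R]
    [Algebra K R] (M : R →ₗ[K] K) {s t : Set R} (h : ∀ x ∈ s, ∀ y ∈ t, M (x * y) = M x * M y)
    {x y : R} (hx : x ∈ Submodule.span K s) (hy : y ∈ Submodule.span K t) :
    M (x * y) = M x * M y :=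
  LinearMap.eqOn_span₂ (B := (LinearMap.mul K R).compr₂ M)
    (B' := (LinearMap.mul K K).compl₁₂ M M) h hx hy

namespace BosonicExtension

section
omit [DecidableEq I]

lemma qh_ne_zero : qh ≠ 0 := pow_ne_zero _ RatFunc.X_ne_zero

lemma ip_zero_left (A : GCM I) (γ : I →₀ ℤ) : ip A 0 γ = 0 := by
  simp [ip]

lemma ip_zero_right (A : GCM I) (β : I →₀ ℤ) : ip A β 0 = 0 := by
  simp [ip]

lemma ip_add_left (A : GCM I) (β₁ β₂ γ : I →₀ ℤ) :
    ip A (β₁ + β₂) γ = ip A β₁ γ + ip A β₂ γ := by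
  unfold ip
  rw [Finsupp.sum_add_index' (by simp)]
  intro i a₁ a₂
  rw [← Finsupp.sum_add]
  congr 1
  ext j b
  ring

lemma ip_add_right (A : GCM I) (β γ₁ γ₂ : I →₀ ℤ) :
    ip A β (γ₁ + γ₂) = ip A β γ₁ + ip A β γ₂ := by
  unfold ip
  rw [← Finsupp.sum_add]
  congr 1
  ext i a
  rw [Finsupp.sum_add_index' (by simp)]
  intro j b₁ b₂
  ring

lemma ip_neg_right (A : GCM I) (β γ : I →₀ ℤ) : ip A β (-γ) = -ip A β γ := by
  rw [eq_neg_iff_add_eq_zero, ← ip_add_right, neg_add_cancel, ip_zero_right]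

lemma ip_single_single (A : GCM I) (i j : I) (a b : ℤ) :
    ip A (Finsupp.single i a) (Finsupp.single j b) = a * b * (A.d i * A.c i j) := by
  simp [ip, Finsupp.sum_single_index]

def wt (l : List (I × ℤ)) : I →₀ ℤ :=
  (l.map fun p => Finsupp.single p.1 (((p.2 + 1).negOnePow : ℤ))).sum

def shift (l : List (I × ℤ)) : List (I × ℤ) := l.map fun p => (p.1, p.2 + 1)

@[simp] lemma wt_nil : wt ([] : List (I × ℤ)) = 0 := rfl

lemma wt_singleton (x : I × ℤ) : wt [x] = Finsupp.single x.1 (((x.2 + 1).negOnePow : ℤ)) := by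
  simp [wt]

lemma wt_cons (x : I × ℤ) (l : List (I × ℤ)) : wt (x :: l) = wt [x] + wt l := by
  simp [wt]

lemma wt_append (l₁ l₂ : List (I × ℤ)) : wt (l₁ ++ l₂) = wt l₁ + wt l₂ := by
  simp [wt]

lemma wt_shift (l : List (I × ℤ)) : wt (shift l) = -wt l := by
  induction l with
  | nil => rfl
  | cons x t ih =>
    change wt ((x.1, x.2 + 1) :: shift t) = _
    rw [wt_cons, ih, wt_cons x, neg_add, wt_singleton, wt_singleton, ← Finsupp.single_neg,
      Int.negOnePow_succ (x.2 + 1)]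
    simp

lemma wt_ne_zero_of_forall_snd_eq {l : List (I × ℤ)} {k : ℤ} (hl : l ≠ [])
    (hk : ∀ p ∈ l, p.2 = k) : wt l ≠ 0 := by
  have hdeg : (wt l).degree = l.length * ((k + 1).negOnePow : ℤ) := by
    clear hl
    induction l with
    | nil => simp
    | cons x t ih =>
      rw [wt_cons, map_add, wt_singleton, Finsupp.degree_single,
        ih (fun p hp => hk p (by simp [hp])), hk x (by simp), List.length_cons]
      push_cast
      ring
  intro h
  rw [h, map_zero, eq_comm, mul_eq_zero] at hdeg
  simp_all [Units.ne_zero]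

abbrev IsNormalOrdered (l : List (I × ℤ)) : Prop := l.Pairwise fun p r => r.2 ≤ p.2

lemma IsNormalOrdered.exists_eq_append {l : List (I × ℤ)} (hl : IsNormalOrdered l) (c : ℤ) :
    ∃ u v, l = u ++ v ∧ (∀ p ∈ u, c ≤ p.2) ∧ ∀ p ∈ v, p.2 < c := by
  refine ⟨l.takeWhile (fun p => c ≤ p.2), l.dropWhile (fun p => c ≤ p.2),
    List.takeWhile_append_dropWhile.symm, fun p hp => by simpa using List.mem_takeWhile_imp hp, ?_⟩
  induction l with
  | nil => simp
  | cons x t ih =>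
    replace hl := List.pairwise_cons.1 hl
    rw [List.dropWhile_cons]
    split_ifs with hx
    · exact ih hl.2
    · simp only [decide_eq_true_eq, not_le] at hx
      intro p hp
      rcases List.mem_cons.1 hp with rfl | hp
      exacts [hx, (hl.1 p hp).trans_lt hx]

end

variable {A : GCM I}

def mono (A : GCM I) (l : List (I × ℤ)) : hA A := (l.map fun p => ff A p.1 p.2).prod

@[simp] lemma mono_nil : mono A [] = 1 := rfl

lemma mono_cons (x : I × ℤ) (l : List (I × ℤ)) : mono A (x :: l) = ff A x.1 x.2 * mono A l := by
  simp [mono]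

lemma mono_append (l₁ l₂ : List (I × ℤ)) : mono A (l₁ ++ l₂) = mono A l₁ * mono A l₂ := by
  simp [mono]

lemma mono_mem_hAwt (l : List (I × ℤ)) : mono A l ∈ hAwt A (wt l) :=
  Submodule.subset_span ⟨l, rfl, rfl⟩

lemma mono_mem_adjoin {P : ℤ → Prop} {S : Set (hA A)} (hS : ∀ i k, P k → ff A i k ∈ S)
    {l : List (I × ℤ)} (hl : ∀ p ∈ l, P p.2) : mono A l ∈ Algebra.adjoin 𝕂 S := by
  induction l with
  | nil => exact one_mem _
  | cons x t ih =>
    rw [mono_cons]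
    exact mul_mem (Algebra.subset_adjoin (hS _ _ (hl x (by simp))))
      (ih fun p hp => hl p (by simp [hp]))

lemma mono_mem_hAge {m : ℤ} {l : List (I × ℤ)} (hl : ∀ p ∈ l, m ≤ p.2) :
    mono A l ∈ hAge A m := by
  refine mono_mem_adjoin ?_ hl
  exact fun i k hk => ⟨i, k, hk, rfl⟩

lemma mono_mem_hAle {m : ℤ} {l : List (I × ℤ)} (hl : ∀ p ∈ l, p.2 ≤ m) :
    mono A l ∈ hAle A m := by
  refine mono_mem_adjoin (P := (· ≤ m)) ?_ hl
  exact fun i k hk => ⟨i, k, hk, rfl⟩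

lemma mono_mem_hAk {m : ℤ} {l : List (I × ℤ)} (hl : ∀ p ∈ l, p.2 = m) :
    mono A l ∈ hAk A m := by
  refine mono_mem_adjoin (P := (· = m)) ?_ hl
  exact fun i k hk => ⟨i, k, hk.ge, hk.le, rfl⟩

lemma mem_span_mono_of_mem_adjoin {P : ℤ → Prop} {x : hA A}
    (hx : x ∈ Algebra.adjoin 𝕂 {y | ∃ i k, P k ∧ y = ff A i k}) :
    x ∈ Submodule.span 𝕂 (mono A '' {l | ∀ p ∈ l, P p.2}) := by
  rw [← Subalgebra.mem_toSubmodule, Algebra.adjoin_eq_span] at hx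
  refine Submodule.span_mono (fun y hy => ?_) hx
  induction hy using Submonoid.closure_induction with
  | mem y hy =>
    obtain ⟨i, k, hk, rfl⟩ := hy
    exact ⟨[(i, k)], by simpa using hk, by simp [mono]⟩
  | one => exact ⟨[], by simp, rfl⟩
  | mul y z _ _ hy hz =>
    obtain ⟨l₁, h₁, rfl⟩ := hy
    obtain ⟨l₂, h₂, rfl⟩ := hz
    exact ⟨l₁ ++ l₂, fun p hp => (List.mem_append.1 hp).elim (h₁ p) (h₂ p), mono_append _ _⟩

lemma hAle_mono (A : GCM I) {m m' : ℤ} (h : m ≤ m') : hAle A m ≤ hAle A m' :=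
  Algebra.adjoin_mono fun _ ⟨i, k, hk, hx⟩ => ⟨i, k, hk.trans h, hx⟩

lemma mul_mem_hAwt {β γ : I →₀ ℤ} {a b : hA A} (ha : a ∈ hAwt A β) (hb : b ∈ hAwt A γ) :
    a * b ∈ hAwt A (β + γ) := by
  have hab := Submodule.mul_mem_mul ha hb
  rw [hAwt, hAwt, Submodule.span_mul_span] at hab
  refine Submodule.span_mono ?_ hab
  rintro _ ⟨_, ⟨l₁, rfl, rfl⟩, _, ⟨l₂, rfl, rfl⟩, rfl⟩
  exact ⟨l₁ ++ l₂, wt_append _ _, (mono_append _ _).symm⟩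

lemma ff_mul_ff (x y : I × ℤ) (h : x.2 < y.2) :
    ff A x.1 x.2 * ff A y.1 y.2 =
      qh ^ (((y.2 - x.2 + 1).negOnePow : ℤ) * (A.d x.1 * A.c x.1 y.1)) •
          (ff A y.1 y.2 * ff A x.1 x.2) +
        if y = (x.1, x.2 + 1) then zi A x.1 • 1 else 0 := by
  have hrel := RingQuot.mkAlgHom_rel 𝕂 (hARel.comm (A := A) x.1 y.1 x.2 y.2 h)
  simp only [map_add, map_mul, map_smul] at hrel
  rw [ff, ff, hrel]
  congr 1
  split_ifs <;> simp_all [Prod.ext_iff, zi]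

lemma ff_mul_ff_of_add_two_le {x y : I × ℤ} (h : x.2 + 2 ≤ y.2) :
    ff A x.1 x.2 * ff A y.1 y.2 =
      qh ^ (-ip A (wt [x]) (wt [y])) • (ff A y.1 y.2 * ff A x.1 x.2) := by
  rw [ff_mul_ff x y (by lia), if_neg (fun hy => by simp [hy] at h), add_zero, wt_singleton,
    wt_singleton, ip_single_single,
    show y.2 - x.2 + 1 = (y.2 + 1) - (x.2 + 1) + 1 by ring, Int.negOnePow_succ, Int.negOnePow_sub]
  push_cast
  ring_nf

lemma ff_mul_mono_of_add_two_le (x : I × ℤ) {l : List (I × ℤ)} (h : ∀ r ∈ l, x.2 + 2 ≤ r.2) :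
    ff A x.1 x.2 * mono A l = qh ^ (-ip A (wt [x]) (wt l)) • (mono A l * ff A x.1 x.2) := by
  induction l with
  | nil => simp [ip_zero_right]
  | cons y t ih =>
    rw [mono_cons, ← mul_assoc, ff_mul_ff_of_add_two_le (h y (by simp)), smul_mul_assoc,
      mul_assoc, ih (fun r hr => h r (by simp [hr])), mul_smul_comm, smul_smul,
      ← zpow_add₀ qh_ne_zero, wt_cons y t, ip_add_right, neg_add, mul_assoc]

lemma mono_mul_mono_of_add_two_le {l₁ l₂ : List (I × ℤ)}
    (h : ∀ p ∈ l₁, ∀ r ∈ l₂, p.2 + 2 ≤ r.2) :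
    mono A l₁ * mono A l₂ = qh ^ (-ip A (wt l₁) (wt l₂)) • (mono A l₂ * mono A l₁) := by
  induction l₁ with
  | nil => simp [ip_zero_left]
  | cons x t ih =>
    rw [mono_cons, mul_assoc, ih (fun p hp => h p (by simp [hp])), mul_smul_comm, ← mul_assoc,
      ff_mul_mono_of_add_two_le x (h x (by simp)), smul_mul_assoc, smul_smul,
      ← zpow_add₀ qh_ne_zero, wt_cons x t, ip_add_left, neg_add, add_comm, mul_assoc]

def normalSpan (A : GCM I) (l₀ : List (I × ℤ)) : Submodule 𝕂 (hA A) :=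
  Submodule.span 𝕂 (mono A '' {l | IsNormalOrdered l ∧ l.Subperm l₀ ∧ wt l = wt l₀})

lemma normalSpan_mono {l₀ l₁ : List (I × ℤ)} (h : l₀.Subperm l₁) (hw : wt l₀ = wt l₁) :
    normalSpan A l₀ ≤ normalSpan A l₁ :=
  Submodule.span_mono (Set.image_mono fun _ ⟨hn, hs, hw'⟩ => ⟨hn, hs.trans h, hw'.trans hw⟩)

lemma mono_mem_normalSpan_of_isNormalOrdered {l : List (I × ℤ)} (hl : IsNormalOrdered l) :
    mono A l ∈ normalSpan A l :=
  Submodule.subset_span ⟨l, ⟨hl, List.Subperm.refl l, rfl⟩, rfl⟩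

/-- Inserting `x` into a normal-ordered word; the hypothesis on shorter words takes care of the
correction term of the commutation relation, which has two letters fewer. -/
lemma ff_mul_mono_mem_normalSpan (x : I × ℤ) : ∀ {l : List (I × ℤ)}, IsNormalOrdered l →
    (∀ t : List (I × ℤ), t.length < l.length → mono A t ∈ normalSpan A t) →
    ff A x.1 x.2 * mono A l ∈ normalSpan A (x :: l)
  | [], _, _ => mono_mem_normalSpan_of_isNormalOrdered (List.pairwise_singleton _ _)
  | y :: t, hl, hIH => by
    replace hl := List.pairwise_cons.1 hl
    by_cases hxy : y.2 ≤ x.2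
    · refine mono_mem_normalSpan_of_isNormalOrdered (List.Pairwise.cons (fun r hr => ?_)
        (List.Pairwise.cons hl.1 hl.2))
      rcases List.mem_cons.1 hr with rfl | hr
      exacts [hxy, (hl.1 r hr).trans hxy]
    rw [not_le] at hxy
    rw [mono_cons, ← mul_assoc, ff_mul_ff x y hxy, add_mul, smul_mul_assoc, mul_assoc]
    refine add_mem (Submodule.smul_mem _ _ ?_) ?_
    · refine Submodule.mul_mem_of_mem_span _
        (ff_mul_mono_mem_normalSpan x hl.2 fun t' ht' => hIH t' (by simp; lia)) ?_
      rintro _ ⟨l', ⟨hn, hs, hw⟩, rfl⟩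
      refine Submodule.subset_span ⟨y :: l', ⟨List.Pairwise.cons (fun r hr => ?_) hn,
        ((List.subperm_cons y).2 hs).trans (List.Perm.swap x y t).subperm, ?_⟩,
        (mono_cons _ _).symm⟩
      · rcases List.mem_cons.1 (hs.subset hr) with rfl | hr
        exacts [hxy.le, hl.1 r hr]
      · rw [wt_cons y l', hw, wt_cons x t, wt_cons x (y :: t), wt_cons y t]
        abel
    · split_ifs with hy
      · rw [smul_mul_assoc, one_mul]
        refine Submodule.smul_mem _ _ (normalSpan_mono ?_ ?_ (hIH t (by simp)))
        · exact ((List.sublist_cons_self y t).trans (List.sublist_cons_self x _)).subperm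
        · rw [wt_cons x (y :: t), wt_cons y t, hy, wt_singleton, wt_singleton,
            Int.negOnePow_succ (x.2 + 1)]
          simp
      · rw [zero_mul]
        exact zero_mem _

theorem mono_mem_normalSpan : ∀ l : List (I × ℤ), mono A l ∈ normalSpan A l
  | [] => mono_mem_normalSpan_of_isNormalOrdered List.Pairwise.nil
  | x :: l => by
    rw [mono_cons]
    refine Submodule.mul_mem_of_mem_span _ (mono_mem_normalSpan l) ?_
    rintro _ ⟨l', ⟨hn, hs, hw⟩, rfl⟩
    refine normalSpan_mono ((List.subperm_cons x).2 hs) (by rw [wt_cons, hw, ← wt_cons]) ?_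
    have hlen := hs.length_le
    exact ff_mul_mono_mem_normalSpan x hn fun t _ => mono_mem_normalSpan t
termination_by l => l.length
decreasing_by all_goals simp only [List.length_cons]; lia

variable {M : hA A →ₗ[𝕂] 𝕂} (hMone : M 1 = 1)
  (hMzero : ∀ (m : ℤ) (β : I →₀ ℤ), β ≠ 0 → ∀ y, y ∈ hAk A m → y ∈ hAwt A β →
      ∀ u ∈ hAgt A m, ∀ v ∈ hAlt A m, M (u * y * v) = 0)
  {F : Type} [FunLike F (hA A) (hA A)] [AlgHomClass F 𝕂 (hA A) (hA A)] {D : F}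
  (hD : ∀ i p, D (ff A i p) = ff A i (p + 1))

section shift

include hD

lemma map_mono (l : List (I × ℤ)) : D (mono A l) = mono A (shift l) := by
  induction l with
  | nil => exact map_one D
  | cons x t ih => rw [mono_cons, map_mul, hD, ih]; rfl

lemma map_mem_hAwt {β : I →₀ ℤ} {a : hA A} (ha : a ∈ hAwt A β) : D a ∈ hAwt A (-β) := by
  induction ha using Submodule.span_induction with
  | mem a ha =>
    obtain ⟨l, rfl, rfl⟩ := ha
    change D (mono A l) ∈ hAwt A (-wt l)
    rw [map_mono hD, ← wt_shift]
    exact mono_mem_hAwt _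
  | zero => rw [map_zero]; exact zero_mem _
  | add a b _ _ ha hb => rw [map_add]; exact add_mem ha hb
  | smul c a _ ha => rw [map_smul]; exact Submodule.smul_mem _ c ha

lemma map_mem_adjoin {P Q : ℤ → Prop} (hPQ : ∀ k, P k → Q (k + 1)) {x : hA A}
    (hx : x ∈ Algebra.adjoin 𝕂 {y | ∃ i k, P k ∧ y = ff A i k}) :
    D x ∈ Algebra.adjoin 𝕂 {y | ∃ i k, Q k ∧ y = ff A i k} := by
  induction hx using Algebra.adjoin_induction with
  | mem y hy =>
    obtain ⟨i, k, hk, rfl⟩ := hy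
    exact Algebra.subset_adjoin ⟨i, k + 1, hPQ k hk, hD i k⟩
  | algebraMap r => rw [AlgHomClass.commutes]; exact Subalgebra.algebraMap_mem _ r
  | add x y _ _ hx hy => rw [map_add]; exact add_mem hx hy
  | mul x y _ _ hx hy => rw [map_mul]; exact mul_mem hx hy

lemma map_mem_hAle_of_mem_hAlt {m : ℤ} {x : hA A} (hx : x ∈ hAlt A m) : D x ∈ hAle A m :=
  map_mem_adjoin hD (P := (· ≤ m - 1)) (fun _ hk => by lia) hx

end shift

section vanishing

include hMzero

lemma map_mono_append_eq_zero {k : ℤ} {u a v : List (I × ℤ)} (hu : ∀ p ∈ u, k + 1 ≤ p.2)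
    (ha : a ≠ []) (hak : ∀ p ∈ a, p.2 = k) (hv : ∀ p ∈ v, p.2 ≤ k - 1) :
    M (mono A (u ++ a ++ v)) = 0 := by
  rw [mono_append, mono_append]
  exact hMzero k (wt a) (wt_ne_zero_of_forall_snd_eq ha hak) _ (mono_mem_hAk hak)
    (mono_mem_hAwt a) _ (mono_mem_hAge hu) _ (mono_mem_hAle hv)

/-- In a normal-ordered form, the letters of lowest level form a nonempty block of nonzero
weight at the end. -/
lemma map_mono_eq_zero {l : List (I × ℤ)} (hl : wt l ≠ 0) : M (mono A l) = 0 := by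
  refine (Submodule.span_le (p := LinearMap.ker M)).2 ?_ (mono_mem_normalSpan l)
  rintro _ ⟨l', ⟨hn, -, hw⟩, rfl⟩
  have hne : l'.toFinset.Nonempty := by
    rw [List.toFinset_nonempty_iff]
    rintro rfl
    exact hl hw.symm
  obtain ⟨p, hp, hmin⟩ := l'.toFinset.exists_min_image Prod.snd hne
  obtain ⟨u, a, rfl, hu, ha⟩ := hn.exists_eq_append (p.2 + 1)
  have ha_ne : a ≠ [] := by
    rintro rfl
    have := hu p (by simpa using hp)
    lia
  have hak : ∀ q ∈ a, q.2 = p.2 := fun q hq =>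
    le_antisymm (by have := ha q hq; lia) (hmin q (by simp [hq]))
  simpa using map_mono_append_eq_zero hMzero hu ha_ne hak (v := []) (by simp)

lemma map_eq_zero_of_mem_hAwt {β : I →₀ ℤ} (hβ : β ≠ 0) {x : hA A} (hx : x ∈ hAwt A β) :
    M x = 0 := by
  refine (Submodule.span_le (p := LinearMap.ker M)).2 ?_ hx
  rintro _ ⟨l, rfl, rfl⟩
  exact map_mono_eq_zero hMzero hβ

lemma map_mono_append_mul_mono_append_of_ne_nil {m : ℤ} {u a b v : List (I × ℤ)}
    (hu : ∀ p ∈ u, m + 1 ≤ p.2) (ha : ∀ p ∈ a, p.2 = m) (hb : ∀ p ∈ b, p.2 = m)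
    (hv : ∀ p ∈ v, p.2 ≤ m - 1) (hab : a ≠ [] ∨ b ≠ []) :
    M (mono A (u ++ a) * mono A (b ++ v)) = M (mono A (u ++ a)) * M (mono A (b ++ v)) := by
  have hab' : a ++ b ≠ [] := by rwa [Ne, List.append_eq_nil_iff, not_and_or]
  rw [← mono_append, show u ++ a ++ (b ++ v) = u ++ (a ++ b) ++ v by simp,
    map_mono_append_eq_zero hMzero hu hab'
      (fun p hp => (List.mem_append.1 hp).elim (ha p) (hb p)) hv]
  rcases hab with ha₀ | hb₀
  · rw [← List.append_nil (u ++ a), map_mono_append_eq_zero hMzero hu ha₀ ha (v := [])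
      (by simp), zero_mul]
  · rw [← List.nil_append (b ++ v), ← List.append_assoc,
      map_mono_append_eq_zero hMzero (u := []) (by simp) hb₀ hb hv, mul_zero]

end vanishing

section multiplicativity

include hMone hMzero

/-- Induction upwards on `m`, which terminates because `N` bounds the levels of `lx`. -/
theorem map_mono_mul_mono (N m : ℤ) {lx ly : List (I × ℤ)} (hx : ∀ p ∈ lx, m ≤ p.2 ∧ p.2 ≤ N)
    (hy : ∀ p ∈ ly, p.2 ≤ m) : M (mono A lx * mono A ly) = M (mono A lx) * M (mono A ly) := by
  by_cases hmN : N < m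
  · obtain rfl : lx = [] := List.eq_nil_iff_forall_not_mem.2 fun p hp => by
      have := hx p hp
      lia
    simp [hMone]
  refine M.map_mul_eq_mul_of_mem_span ?_ (mono_mem_normalSpan lx) (mono_mem_normalSpan ly)
  rintro _ ⟨l₁, ⟨hn₁, hs₁, -⟩, rfl⟩ _ ⟨l₂, ⟨hn₂, hs₂, -⟩, rfl⟩
  obtain ⟨u, a, rfl, hu, ha⟩ := hn₁.exists_eq_append (m + 1)
  obtain ⟨b, v, rfl, hb, hv⟩ := hn₂.exists_eq_append m
  have hx' : ∀ p ∈ u ++ a, m ≤ p.2 ∧ p.2 ≤ N := fun p hp => hx p (hs₁.subset hp)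
  have hy' : ∀ p ∈ b ++ v, p.2 ≤ m := fun p hp => hy p (hs₂.subset hp)
  have hv' : ∀ p ∈ v, p.2 ≤ m - 1 := fun p hp => by
    have := hv p hp
    lia
  by_cases hab : a = [] ∧ b = []
  · obtain ⟨rfl, rfl⟩ := hab
    rw [List.append_nil, List.nil_append]
    exact map_mono_mul_mono N (m + 1) (fun p hp => ⟨hu p hp, (hx' p (by simp [hp])).2⟩)
      (fun p hp => by have := hv p hp; lia)
  refine map_mono_append_mul_mono_append_of_ne_nil hMzero hu (fun p hp => ?_)
    (fun p hp => le_antisymm (hy' p (by simp [hp])) (hb p hp)) hv' (not_and_or.1 hab)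
  have := ha p hp
  have := (hx' p (by simp [hp])).1
  lia
termination_by (N + 1 - m).toNat
decreasing_by lia

theorem map_mul_of_mem_hAge_of_mem_hAle {m : ℤ} {x y : hA A} (hx : x ∈ hAge A m)
    (hy : y ∈ hAle A m) : M (x * y) = M x * M y := by
  refine M.map_mul_eq_mul_of_mem_span ?_ (mem_span_mono_of_mem_adjoin hx)
    (mem_span_mono_of_mem_adjoin (P := (· ≤ m)) hy)
  rintro _ ⟨lx, hlx, rfl⟩ _ ⟨ly, hly, rfl⟩
  obtain ⟨N, hN⟩ := (lx.map Prod.snd).toFinset.bddAbove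
  exact map_mono_mul_mono hMone hMzero N m
    (fun p hp => ⟨hlx p hp, hN (by simpa using ⟨p.1, hp⟩)⟩) hly

end multiplicativity

section pairing

/-- The pairing `⟨⟨a, b⟩⟩ = M(a 𝒟̄(b))`. -/
def pairing (M : hA A →ₗ[𝕂] 𝕂) (D : F) (a b : hA A) : 𝕂 := M (a * D b)

include hMzero hD

lemma pairing_eq_zero_of_ne {β γ : I →₀ ℤ} (hne : β ≠ γ) {a b : hA A} (ha : a ∈ hAwt A β)
    (hb : b ∈ hAwt A γ) : pairing M D a b = 0 :=
  map_eq_zero_of_mem_hAwt hMzero (sub_ne_zero.2 hne)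
    (by simpa [sub_eq_add_neg] using mul_mem_hAwt ha (map_mem_hAwt hD hb))

include hMone

lemma pairing_mul_mono_mono_mul {m : ℤ} {x w : hA A} (hx : x ∈ hAge A m) (hw : w ∈ hAlt A m)
    {ly lz : List (I × ℤ)} (hly : ∀ p ∈ ly, p.2 ≤ m - 1) (hlz : ∀ p ∈ lz, m ≤ p.2) :
    pairing M D (x * mono A ly) (mono A lz * w) =
      qh ^ ip A (wt ly) (wt lz) * (pairing M D x (mono A lz) * pairing M D (mono A ly) w) := by
  have hshift : ∀ p ∈ shift lz, m + 1 ≤ p.2 := by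
    simp only [shift, List.mem_map]
    rintro _ ⟨p, hp, rfl⟩
    simpa using hlz p hp
  have hgap : ∀ p ∈ ly, ∀ r ∈ shift lz, p.2 + 2 ≤ r.2 := fun p hp r hr => by
    have := hly p hp
    have := hshift r hr
    lia
  have hcomm := mono_mul_mono_of_add_two_le (A := A) hgap
  rw [wt_shift, ip_neg_right, neg_neg] at hcomm
  simp only [pairing, map_mul, map_mono hD]
  rw [mul_assoc x, ← mul_assoc (mono A ly), hcomm, smul_mul_assoc, mul_smul_comm, map_smul,
    smul_eq_mul, ← mul_assoc x, ← mul_assoc x, mul_assoc (x * _),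
    map_mul_of_mem_hAge_of_mem_hAle hMone hMzero (mul_mem hx ?_)
      (mul_mem ?_ (map_mem_hAle_of_mem_hAlt hD hw))]
  · exact mono_mem_hAge fun p hp => by have := hshift p hp; lia
  · exact mono_mem_hAle fun p hp => by have := hly p hp; lia

/-- Bilinear in `(y, z)`, so it suffices to take monomials; a monomial of weight other than
that of `x` resp. `w` pairs to zero with it. -/
theorem pairing_mul_mul_of_mem_hAwt_outer {m : ℤ} {β ε : I →₀ ℤ} {x y z w : hA A}
    (hxg : x ∈ hAge A m) (hxw : x ∈ hAwt A β) (hzg : z ∈ hAge A m)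
    (hyl : y ∈ hAlt A m) (hwl : w ∈ hAlt A m) (hww : w ∈ hAwt A ε) :
    pairing M D (x * y) (z * w) = qh ^ ip A ε β * (pairing M D x z * pairing M D y w) := by
  let B : hA A →ₗ[𝕂] hA A →ₗ[𝕂] 𝕂 := LinearMap.mk₂ 𝕂
    (fun y z => pairing M D (x * y) (z * w))
    (by intros; simp [pairing, mul_add, add_mul]) (by intros; simp [pairing])
    (by intros; simp [pairing, mul_add, add_mul]) (by intros; simp [pairing])
  let B' : hA A →ₗ[𝕂] hA A →ₗ[𝕂] 𝕂 := LinearMap.mk₂ 𝕂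
    (fun y z => qh ^ ip A ε β * (pairing M D x z * pairing M D y w))
    (by intros; simp [pairing, add_mul]; ring) (by intros; simp [pairing]; ring)
    (by intros; simp [pairing, mul_add]; ring) (by intros; simp [pairing]; ring)
  refine LinearMap.eqOn_span₂ (B := B) (B' := B') ?_
    (mem_span_mono_of_mem_adjoin (P := (· ≤ m - 1)) hyl) (mem_span_mono_of_mem_adjoin hzg)
  rintro _ ⟨ly, hly, rfl⟩ _ ⟨lz, hlz, rfl⟩
  simp only [B, B', LinearMap.mk₂_apply]
  rw [pairing_mul_mono_mono_mul hMone hMzero hD hxg hwl hly hlz]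
  by_cases hz : wt lz = β
  · by_cases hy : wt ly = ε
    · rw [hy, hz]
    · simp [pairing_eq_zero_of_ne hMzero hD hy (mono_mem_hAwt ly) hww]
  · simp [pairing_eq_zero_of_ne hMzero hD (Ne.symm hz) hxw (mono_mem_hAwt lz)]

theorem pairing_mul_mul {m : ℤ} {β γ δ ε : I →₀ ℤ} {x y z w : hA A}
    (hxg : x ∈ hAge A m) (hxw : x ∈ hAwt A β) (hzg : z ∈ hAge A m) (hzw : z ∈ hAwt A δ)
    (hyl : y ∈ hAlt A m) (hyw : y ∈ hAwt A γ) (hwl : w ∈ hAlt A m) (hww : w ∈ hAwt A ε) :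
    pairing M D (x * y) (z * w) = qh ^ ip A γ δ * (pairing M D x z * pairing M D y w) := by
  rw [pairing_mul_mul_of_mem_hAwt_outer hMone hMzero hD hxg hxw hzg hyl hwl hww]
  rcases eq_or_ne (pairing M D x z * pairing M D y w) 0 with h₀ | h₀
  · rw [h₀, mul_zero, mul_zero]
  obtain ⟨hxz, hyw'⟩ := mul_ne_zero_iff.1 h₀
  have hβδ : β = δ := by_contra fun h => hxz (pairing_eq_zero_of_ne hMzero hD h hxw hzw)
  have hγε : γ = ε := by_contra fun h => hyw' (pairing_eq_zero_of_ne hMzero hD h hyw hww)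
  rw [hβδ, hγε]

theorem pairing_mul_eq_zero {m : ℤ} {β : I →₀ ℤ} (hβ : β ≠ 0) {x y w : hA A}
    (hxg : x ∈ hAge A m) (hxw : x ∈ hAwt A β) (hyl : y ∈ hAlt A m) (hwl : w ∈ hAlt A m) :
    pairing M D (x * y) w = 0 := by
  rw [pairing, mul_assoc, map_mul_of_mem_hAge_of_mem_hAle hMone hMzero hxg
      (mul_mem (hAle_mono A (by lia) hyl) (map_mem_hAle_of_mem_hAlt hD hwl)),
    map_eq_zero_of_mem_hAwt hMzero hβ hxw, zero_mul]

end pairing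

end BosonicExtension

/-- for homogeneous `x, z ∈ Â_{≥m}` and homogeneous `y, w ∈ Â_{<m}`,
`⟨⟨xy, zw⟩⟩ = q^{(wt y, wt z)} ⟨⟨x,z⟩⟩ ⟨⟨y,w⟩⟩`; in particular `⟨⟨xy, w⟩⟩ = 0` when
`wt x ≠ 0`; moreover `M(xy) = M(x) M(y)` for `x ∈ Â_{≥m}`, `y ∈ Â_{≤m}`.
Here `⟨⟨x,y⟩⟩ := M(x 𝒟̄(y))`. -/
theorem statement13 (A : GCM I)
    (M : hA A →ₗ[𝕂] 𝕂)
    (hMone : M 1 = 1)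
    (hMzero : ∀ (m : ℤ) (β : I →₀ ℤ), β ≠ 0 → ∀ y, y ∈ hAk A m → y ∈ hAwt A β →
      ∀ u ∈ hAgt A m, ∀ v ∈ hAlt A m, M (u * y * v) = 0)
    (Dm : hA A ≃ₐ[𝕂] hA A)
    (hD : ∀ i p, Dm (ff A i p) = ff A i (p + 1))
    (m : ℤ) :
    (∀ (β γ δ ε : I →₀ ℤ) (x y z w : hA A),
      x ∈ hAge A m → x ∈ hAwt A β → z ∈ hAge A m → z ∈ hAwt A δ →
      y ∈ hAlt A m → y ∈ hAwt A γ → w ∈ hAlt A m → w ∈ hAwt A ε →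
      M ((x * y) * Dm (z * w)) = qh ^ ip A γ δ * (M (x * Dm z) * M (y * Dm w))) ∧
    (∀ (β : I →₀ ℤ) (x y w : hA A), β ≠ 0 →
      x ∈ hAge A m → x ∈ hAwt A β → y ∈ hAlt A m → w ∈ hAlt A m →
      M ((x * y) * Dm w) = 0) ∧
    (∀ x y : hA A, x ∈ hAge A m → y ∈ hAle A m → M (x * y) = M x * M y) :=
  ⟨fun _ _ _ _ _ _ _ _ hxg hxw hzg hzw hyl hyw hwl hww =>
      BosonicExtension.pairing_mul_mul hMone hMzero hD hxg hxw hzg hzw hyl hyw hwl hww,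
    fun _ _ _ _ hβ hxg hxw hyl hwl =>
      BosonicExtension.pairing_mul_eq_zero hMone hMzero hD hβ hxg hxw hyl hwl,
    fun _ _ hx hy => BosonicExtension.map_mul_of_mem_hAge_of_mem_hAle hMone hMzero hx hy⟩

end
end
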